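/- Let A, B be symmetric n×n real matrices with A positive definite, and let ψ_{A,B}(x) = (πℏ)^{−n/4} (det A)^{1/4} exp(−⟨(A + iB)x, x⟩/2ℏ). Then for all z = (x, p) ∈ ℝ^{2n}, Wψ_{A,B}(z) = (πℏ)^{−n} exp(−⟨G z, z⟩/ℏ), where G is the symmetric positive definite block matrix G = [[A + B A⁻¹ B, B A⁻¹],[A⁻¹ B, A⁻¹]], i.e. ⟨Gz, z⟩ = ⟨(A + BA⁻¹B)x, x⟩ + 2⟨A⁻¹Bx, p⟩ + ⟨A⁻¹p, p⟩. -/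

import Mathlib

open MeasureTheory Real Metric
open scoped RealInnerProductSpace

noncomputable section

/-- `ℝⁿ` with its Euclidean structure. -/
abbrev En (n : ℕ) := EuclideanSpace ℝ (Fin n)

/-- The quadratic form `z ↦ ⟨Mz, z⟩`. -/
def qf {m : Type*} [Fintype m] [DecidableEq m] (M : Matrix m m ℝ)
    (z : EuclideanSpace ℝ m) : ℝ := ⟪(Matrix.toEuclideanLin M) z, z⟫

/-- The `ℏ`-Fourier transform `Fψ(p) = (2πℏ)^{-n/2} ∫ e^{-i⟨p,x⟩/ℏ} ψ(x) dx`. -/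
def hFourier (n : ℕ) (ℏ : ℝ) (ψ : En n → ℂ) (p : En n) : ℂ :=
  Complex.ofReal ((2 * π * ℏ) ^ (-(n : ℝ) / 2)) *
    ∫ x : En n, Complex.exp (-(Complex.I * Complex.ofReal ⟪p, x⟫) / Complex.ofReal ℏ) * ψ x

/-- The Wigner function
`Wψ(x,p) = (2πℏ)^{-n} ∫ e^{-i⟨p,y⟩/ℏ} ψ(x + y/2) conj(ψ(x - y/2)) dy`. -/
def Wigner (n : ℕ) (ℏ : ℝ) (ψ : En n → ℂ) (x p : En n) : ℂ :=
  Complex.ofReal ((2 * π * ℏ) ^ (-(n : ℝ))) *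
    ∫ y : En n, Complex.exp (-(Complex.I * Complex.ofReal ⟪p, y⟫) / Complex.ofReal ℏ) *
      ψ (x + (2 : ℝ)⁻¹ • y) * (starRingEnd ℂ) (ψ (x - (2 : ℝ)⁻¹ • y))

/-- The centered generalized Gaussian
`ψ_{A,B}(x) = (πℏ)^{-n/4} (det A)^{1/4} e^{-⟨(A+iB)x,x⟩/2ℏ}`. -/
def gaussianAB (n : ℕ) (ℏ : ℝ) (A B : Matrix (Fin n) (Fin n) ℝ) (x : En n) : ℂ :=
  Complex.ofReal ((π * ℏ) ^ (-(n : ℝ) / 4) * A.det ^ ((1 : ℝ) / 4)) *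
    Complex.exp (-(Complex.ofReal (qf A x) + Complex.I * Complex.ofReal (qf B x)) /
      (2 * Complex.ofReal ℏ))

/-!
The product `ψ(x + y/2) · conj ψ(x - y/2)` is a Gaussian in `y`: the `A`-parts combine to
`e^{-⟨Ax,x⟩/ℏ} e^{-⟨Ay,y⟩/4ℏ}`, while the `B`-parts cancel up to the linear phase
`e^{-i⟨Bx,y⟩/ℏ}`. The Wigner function is therefore the Fourier transform of `e^{-⟨Ay,y⟩/4ℏ}`
at the shifted momentum `p + Bx`. Writing `A = SᴴS` and substituting `u = Sy` reduces this to the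
isotropic Gaussian integral, which yields `(det A)^{-1/2} e^{-⟨A⁻¹(p + Bx), p + Bx⟩/ℏ}`, and
`⟨Ax,x⟩ + ⟨A⁻¹(p + Bx), p + Bx⟩` expands to `⟨Gz,z⟩`.
-/

open scoped Matrix

lemma toEuclideanLin_mul_apply {m n o : Type*} [Fintype n] [DecidableEq n] [Fintype o]
    [DecidableEq o] (M : Matrix m n ℝ) (N : Matrix n o ℝ) (v : EuclideanSpace ℝ o) :
    (M * N).toEuclideanLin v = M.toEuclideanLin (N.toEuclideanLin v) := by
  simp

section QuadraticForm

variable {m : Type*} [Fintype m] [DecidableEq m]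

lemma inner_toEuclideanLin_comm {M : Matrix m m ℝ} (hM : M.IsHermitian)
    (u v : EuclideanSpace ℝ m) : ⟪M.toEuclideanLin u, v⟫ = ⟪M.toEuclideanLin v, u⟫ := by
  rw [Matrix.isSymmetric_toEuclideanLin_iff.mpr hM, real_inner_comm]

lemma qf_matrix_add (M N : Matrix m m ℝ) (z : EuclideanSpace ℝ m) :
    qf (M + N) z = qf M z + qf N z := by
  simp only [qf, map_add, LinearMap.add_apply, inner_add_left]

lemma qf_smul (M : Matrix m m ℝ) (r : ℝ) (z : EuclideanSpace ℝ m) :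
    qf M (r • z) = r ^ 2 * qf M z := by
  simp only [qf, map_smul, real_inner_smul_left, real_inner_smul_right]
  ring

lemma qf_add {M : Matrix m m ℝ} (hM : M.IsHermitian) (u v : EuclideanSpace ℝ m) :
    qf M (u + v) = qf M u + 2 * ⟪M.toEuclideanLin u, v⟫ + qf M v := by
  simp only [qf, map_add, inner_add_left, inner_add_right, inner_toEuclideanLin_comm hM v u]
  ring

lemma qf_add_add_qf_sub (M : Matrix m m ℝ) (u v : EuclideanSpace ℝ m) :
    qf M (u + v) + qf M (u - v) = 2 * (qf M u + qf M v) := by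
  simp only [qf, map_add, map_sub, inner_add_left, inner_add_right, inner_sub_left,
    inner_sub_right]
  ring

lemma qf_add_sub_qf_sub {M : Matrix m m ℝ} (hM : M.IsHermitian) (u v : EuclideanSpace ℝ m) :
    qf M (u + v) - qf M (u - v) = 4 * ⟪M.toEuclideanLin u, v⟫ := by
  simp only [qf, map_add, map_sub, inner_add_left, inner_add_right, inner_sub_left,
    inner_sub_right, inner_toEuclideanLin_comm hM v u]
  ring

lemma qf_toEuclideanLin (M N : Matrix m m ℝ) (z : EuclideanSpace ℝ m) :
    qf M (N.toEuclideanLin z) = qf (Nᴴ * M * N) z := by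
  rw [qf, qf, toEuclideanLin_mul_apply, toEuclideanLin_mul_apply,
    Matrix.toEuclideanLin_conjTranspose_eq_adjoint, LinearMap.adjoint_inner_left]

lemma qf_conjTranspose_mul_self (S : Matrix m m ℝ) (z : EuclideanSpace ℝ m) :
    qf (Sᴴ * S) z = ‖S.toEuclideanLin z‖ ^ 2 := by
  rw [← Matrix.mul_one Sᴴ, ← qf_toEuclideanLin, qf, Matrix.toLpLin_one, LinearMap.id_apply,
    real_inner_self_eq_norm_sq]

lemma qf_add_qf_inv_add {A B : Matrix m m ℝ} (hA : A.IsHermitian) (hB : B.IsHermitian)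
    (x p : EuclideanSpace ℝ m) :
    qf A x + qf A⁻¹ (p + B.toEuclideanLin x) =
      qf (A + B * A⁻¹ * B) x + 2 * ⟪(A⁻¹ * B).toEuclideanLin x, p⟫ + qf A⁻¹ p := by
  rw [add_comm p, qf_add hA.inv, qf_toEuclideanLin, hB.eq, qf_matrix_add,
    toEuclideanLin_mul_apply]
  ring

end QuadraticForm

theorem integral_comp_linearMap_of_det_ne_zero {E F : Type*} [NormedAddCommGroup E]
    [NormedSpace ℝ E] [MeasurableSpace E] [BorelSpace E] [FiniteDimensional ℝ E]
    [NormedAddCommGroup F] [NormedSpace ℝ F] (μ : Measure E) [μ.IsAddHaarMeasure]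
    {L : E →ₗ[ℝ] E} (hL : LinearMap.det L ≠ 0) (f : E → F) :
    ∫ y, f (L y) ∂μ = |LinearMap.det L|⁻¹ • ∫ z, f z ∂μ := by
  have hL_emb : MeasurableEmbedding L :=
    (LinearMap.equivOfDetNeZero L hL).toContinuousLinearEquiv.toHomeomorph.measurableEmbedding
  rw [← hL_emb.integral_map, Measure.map_linearMap_addHaar_eq_smul_addHaar μ hL,
    integral_smul_measure, ENNReal.toReal_ofReal (by positivity), abs_inv]

open scoped MatrixOrder in
theorem integral_cexp_neg_mul_qf_add {m : Type*} [Fintype m] [DecidableEq m]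
    {A : Matrix m m ℝ} (hA : A.PosDef) {b : ℂ} (hb : 0 < b.re) (c : ℂ)
    (w : EuclideanSpace ℝ m) :
    ∫ v, Complex.exp (-b * qf A v + c * ⟪w, v⟫) =
      (√A.det)⁻¹ • ((π / b) ^ (Fintype.card m / 2 : ℂ) *
        Complex.exp (c ^ 2 * qf A⁻¹ w / (4 * b))) := by
  obtain ⟨S, rfl⟩ : ∃ S, A = Sᴴ * S :=
    CStarAlgebra.nonneg_iff_eq_star_mul_self.mp hA.posSemidef.nonneg
  have hdet : (Sᴴ * S).det = S.det ^ 2 := by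
    rw [Matrix.det_mul, Matrix.det_conjTranspose, star_trivial, sq]
  have hS : IsUnit S.det := by
    rw [isUnit_iff_ne_zero, ← pow_ne_zero_iff two_ne_zero, ← hdet]
    exact hA.det_pos.ne'
  set w' := (S⁻¹)ᴴ.toEuclideanLin w with hw'
  have hinner (v : EuclideanSpace ℝ m) : ⟪w, v⟫ = ⟪w', S.toEuclideanLin v⟫ := by
    rw [hw', Matrix.toEuclideanLin_conjTranspose_eq_adjoint, LinearMap.adjoint_inner_left,
      ← toEuclideanLin_mul_apply, Matrix.nonsing_inv_mul S hS, Matrix.toLpLin_one,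
      LinearMap.id_apply]
  have hinv : qf (Sᴴ * S)⁻¹ w = ‖w'‖ ^ 2 := by
    rw [Matrix.mul_inv_rev, ← Matrix.conjTranspose_nonsing_inv, ← qf_conjTranspose_mul_self,
      Matrix.conjTranspose_conjTranspose]
  have hdet_sqrt : √(Sᴴ * S).det = |S.det| := by rw [hdet, Real.sqrt_sq_eq_abs]
  have hL : LinearMap.det S.toEuclideanLin ≠ 0 := by
    rw [LinearMap.det_toLpLin]
    exact hS.ne_zero
  calc ∫ v, Complex.exp (-b * qf (Sᴴ * S) v + c * ⟪w, v⟫)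
      = ∫ v, Complex.exp (-b * ‖S.toEuclideanLin v‖ ^ 2 + c * ⟪w', S.toEuclideanLin v⟫) := by
        simp_rw [qf_conjTranspose_mul_self, hinner]
        push_cast
        rfl
    _ = |S.det|⁻¹ • ∫ u, Complex.exp (-b * ‖u‖ ^ 2 + c * ⟪w', u⟫) := by
        rw [integral_comp_linearMap_of_det_ne_zero volume hL
          (fun u ↦ Complex.exp (-b * ‖u‖ ^ 2 + c * ⟪w', u⟫)), LinearMap.det_toLpLin]
    _ = _ := by
        rw [GaussianFourier.integral_cexp_neg_mul_sq_norm_add hb, finrank_euclideanSpace, hinv,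
          hdet_sqrt]
        push_cast
        rfl

lemma wigner_integrand_gaussianAB {n : ℕ} (ℏ : ℝ) (A : Matrix (Fin n) (Fin n) ℝ)
    {B : Matrix (Fin n) (Fin n) ℝ} (hB : B.IsHermitian) (x p y : En n) :
    Complex.exp (-(Complex.I * ⟪p, y⟫) / ℏ) * gaussianAB n ℏ A B (x + (2 : ℝ)⁻¹ • y) *
        (starRingEnd ℂ) (gaussianAB n ℏ A B (x - (2 : ℝ)⁻¹ • y)) =
      ((π * ℏ) ^ (-(n : ℝ) / 4) * A.det ^ ((1 : ℝ) / 4) : ℝ) ^ 2 *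
        (Complex.exp (-qf A x / ℏ) * Complex.exp
          (-(4 * ℏ : ℂ)⁻¹ * qf A y + -Complex.I / ℏ * ⟪p + B.toEuclideanLin x, y⟫)) := by
  have hA_sum : (qf A (x + (2 : ℝ)⁻¹ • y) : ℂ) + qf A (x - (2 : ℝ)⁻¹ • y) =
      2 * qf A x + qf A y / 2 := by
    norm_cast
    rw [qf_add_add_qf_sub, qf_smul]
    ring
  have hB_diff : (qf B (x + (2 : ℝ)⁻¹ • y) : ℂ) - qf B (x - (2 : ℝ)⁻¹ • y) =
      2 * ⟪B.toEuclideanLin x, y⟫ := by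
    norm_cast
    rw [qf_add_sub_qf_sub hB, real_inner_smul_right]
    ring
  simp only [gaussianAB, map_mul, Complex.conj_ofReal, ← Complex.exp_conj, map_div₀, map_neg,
    map_add, Complex.conj_I, map_ofNat]
  rw [show ∀ a b c d : ℂ, a * (b * c) * (b * d) = b ^ 2 * (a * c * d) from
      fun _ _ _ _ ↦ by ring, ← Complex.exp_add, ← Complex.exp_add, ← Complex.exp_add]
  congr 2
  push_cast [inner_add_left]
  linear_combination (-1 / (2 * ℏ) : ℂ) * hA_sum + (-Complex.I / (2 * ℏ) : ℂ) * hB_diff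

lemma wigner_gaussianAB_prefactor {n : ℕ} {ℏ d : ℝ} (hℏ : 0 < ℏ) (hd : 0 < d) :
    (2 * π * ℏ) ^ (-(n : ℝ)) * ((π * ℏ) ^ (-(n : ℝ) / 4) * d ^ ((1 : ℝ) / 4)) ^ 2 *
      ((√d)⁻¹ * (4 * π * ℏ) ^ ((n : ℝ) / 2)) = (π * ℏ) ^ (-(n : ℝ)) := by
  have hπℏ : 0 < π * ℏ := by positivity
  have h2 : (0 : ℝ) < 2 * (π * ℏ) := by positivity
  have h4 : (0 : ℝ) < 2 ^ 2 * (π * ℏ) := by positivity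
  rw [show 2 * π * ℏ = 2 * (π * ℏ) by ring, show 4 * π * ℏ = 2 ^ 2 * (π * ℏ) by ring,
    Real.sqrt_eq_rpow, ← Real.rpow_neg hd.le]
  simp only [Real.rpow_def_of_pos, hd, hπℏ, h2, h4, Real.log_mul two_ne_zero hπℏ.ne',
    Real.log_mul (pow_ne_zero 2 two_ne_zero) hπℏ.ne', Real.log_pow, ← Real.exp_nat_mul,
    ← Real.exp_add]
  congr 1
  push_cast
  ring

/-- the Wigner function of the generalized Gaussian `ψ_{A,B}` is
`Wψ_{A,B}(x,p) = (πℏ)^{-n} e^{-⟨Gz,z⟩/ℏ}` with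
`⟨Gz,z⟩ = ⟨(A + BA⁻¹B)x,x⟩ + 2⟨A⁻¹Bx,p⟩ + ⟨A⁻¹p,p⟩`. -/
theorem stmt13 (n : ℕ) (ℏ : ℝ) (hℏ : 0 < ℏ)
    (A B : Matrix (Fin n) (Fin n) ℝ) (hA : A.PosDef) (hB : B.IsSymm) (x p : En n) :
    Wigner n ℏ (gaussianAB n ℏ A B) x p =
      Complex.ofReal ((π * ℏ) ^ (-(n : ℝ))) *
        Complex.exp (-Complex.ofReal
          (qf (A + B * A⁻¹ * B) x + 2 * ⟪(Matrix.toEuclideanLin (A⁻¹ * B)) x, p⟫ + qf A⁻¹ p)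
          / Complex.ofReal ℏ) := by
  have hB' : B.IsHermitian := Matrix.isHermitian_iff_isSymm.mpr hB
  have hb : 0 < (4 * ℏ : ℂ)⁻¹.re := by
    norm_cast
    positivity
  have hpow : (π / (4 * ℏ : ℂ)⁻¹) ^ (Fintype.card (Fin n) / 2 : ℂ) =
      ((4 * π * ℏ) ^ ((n : ℝ) / 2) : ℝ) := by
    rw [Fintype.card_fin, div_inv_eq_mul, Complex.ofReal_cpow (by positivity)]
    push_cast
    ring_nf
  have hexp : (-Complex.I / ℏ) ^ 2 * qf A⁻¹ (p + B.toEuclideanLin x) / (4 * (4 * ℏ : ℂ)⁻¹) =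
      -qf A⁻¹ (p + B.toEuclideanLin x) / ℏ := by
    have : (ℏ : ℂ) ≠ 0 := by exact_mod_cast hℏ.ne'
    field_simp
    rw [Complex.I_sq]
    ring
  simp only [Wigner, wigner_integrand_gaussianAB ℏ A hB', integral_const_mul,
    integral_cexp_neg_mul_qf_add hA hb, hpow, hexp]
  rw [← qf_add_qf_inv_add hA.isHermitian hB', ← wigner_gaussianAB_prefactor hℏ hA.det_pos]
  push_cast [Complex.real_smul]
  rw [neg_add, add_div, Complex.exp_add]
  ring
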